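/- Let m ≥ 5, 2 ≤ ℓ ≤ m/2, 0 ≤ R ≤ (m−ℓ)/(ℓ−1), A := {0,1,m−ℓ+1,…,m}, t := C(ℓ+R,R), and H := 2R+1. Then (HA)^{(t)} ≠ [0, Hm] ∖ (E_t(A) ∪ (Hm − E_t(m−A))); i.e., (HA)^{(t)} is not structured. In particular, the element g := (R+1)(m−ℓ+1)−1 lies in the right-hand side but not in (HA)^{(t)}. -/

import Mathlib

/-- Total representation function of `A = {0, 1, m−ℓ+1, …, m}`: coefficients on the
nonzero elements `1, m−ℓ+1, …, m`. -/
noncomputable def rhoA (m ℓ n : ℕ) : ℕ :=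
  Nat.card {k : Fin (ℓ + 1) → ℕ //
    k 0 * 1 + (∑ i : Fin ℓ, k i.succ * (m - ℓ + 1 + i.val)) = n}

/-- Representation function of `hA`: at most `h` nonzero summands (zeros allowed since
`0 ∈ A`). -/
noncomputable def rhoALe (m ℓ h n : ℕ) : ℕ :=
  Nat.card {k : Fin (ℓ + 1) → ℕ //
    k 0 * 1 + (∑ i : Fin ℓ, k i.succ * (m - ℓ + 1 + i.val)) = n ∧
    (∑ i : Fin (ℓ + 1), k i) ≤ h}

/-- Total representation function of `m − A = {0, 1, …, ℓ−1, m−1, m}`. -/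
noncomputable def rhomA (m ℓ n : ℕ) : ℕ :=
  Nat.card {k : Fin (ℓ + 1) → ℕ //
    ∑ i : Fin (ℓ + 1), k i *
      (if i.val < ℓ - 1 then i.val + 1 else if i.val = ℓ - 1 then m - 1 else m) = n}

/-!
Write `g = (R+1)(m-ℓ+1) - 1`. Since `R·m ≤ g < (R+1)(m-ℓ+1)`, a representation of `g` by `A`
is the same thing as a choice of at most `R` summands among the `ℓ` large elements
`m-ℓ+1, …, m`, topped up with `1`s; hence `ρ_A(g) = C(ℓ+R, R) = t`. Likewise `Hm - g ≥ R·m`, so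
every choice of at most `R` summands among the elements `2, …, ℓ-1, m-1, m` of `m - A`, topped
up with `1`s, represents `Hm - g`, and `ρ_{m-A}(Hm - g) ≥ t`. But the representation `g = g·1`
needs `g > H` summands, so `ρ_{A,H}(g) < t`.
-/

section WeightedSums

variable {ι : Type*} [Fintype ι]

lemma sum_mul_le_weightedSum {w : ι → ℕ} {b : ℕ} (hb : ∀ i, b ≤ w i) (x : ι → ℕ) :
    (∑ i, x i) * b ≤ ∑ i, x i * w i := by
  rw [Finset.sum_mul]
  exact Finset.sum_le_sum fun i _ => Nat.mul_le_mul_left _ (hb i)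

lemma weightedSum_le_sum_mul {w : ι → ℕ} {W : ℕ} (hW : ∀ i, w i ≤ W) (x : ι → ℕ) :
    ∑ i, x i * w i ≤ (∑ i, x i) * W := by
  rw [Finset.sum_mul]
  exact Finset.sum_le_sum fun i _ => Nat.mul_le_mul_left _ (hW i)

lemma weightedSum_le_iff_sum_le {w : ι → ℕ} {b W R n : ℕ} (hb : ∀ i, b ≤ w i)
    (hW : ∀ i, w i ≤ W) (hRW : R * W ≤ n) (hn : n < (R + 1) * b) (x : ι → ℕ) :
    ∑ i, x i * w i ≤ n ↔ ∑ i, x i ≤ R := by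
  constructor
  · intro hx
    by_contra! hR
    have : (R + 1) * b ≤ (∑ i, x i) * b := Nat.mul_le_mul_right b hR
    have := this.trans (sum_mul_le_weightedSum hb x)
    omega
  · intro hx
    exact (weightedSum_le_sum_mul hW x).trans ((Nat.mul_le_mul_right W hx).trans hRW)

lemma finite_weightedSum_le {w : ι → ℕ} (hw : ∀ i, 0 < w i) (n : ℕ) :
    Finite {x : ι → ℕ // ∑ i, x i * w i ≤ n} := by
  refine Set.Finite.to_subtype ((Set.Finite.pi fun _ => Set.finite_Iic n).subset
    fun x hx i _ => ?_)
  calc x i ≤ x i * w i := Nat.le_mul_of_pos_right _ (hw i)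
    _ ≤ ∑ j, x j * w j :=
        Finset.single_le_sum (f := fun j => x j * w j) (fun _ _ => Nat.zero_le _) (Finset.mem_univ i)
    _ ≤ n := hx

end WeightedSums

def consSlackEquiv {n : ℕ} (f : (Fin n → ℕ) → ℕ) (N : ℕ) :
    {k : Fin (n + 1) → ℕ // k 0 + f (Fin.tail k) = N} ≃ {x : Fin n → ℕ // f x ≤ N} where
  toFun k := ⟨Fin.tail k.1, by have := k.2; omega⟩
  invFun x := ⟨Fin.cons (N - f x.1) x.1, by simp [Nat.sub_add_cancel x.2]⟩
  left_inv k := by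
    obtain ⟨k, hk⟩ := k
    have h0 : N - f (Fin.tail k) = k 0 := by omega
    ext1
    simp only [h0, Fin.cons_self_tail]
  right_inv x := Subtype.ext (funext fun _ => rfl)

lemma card_sum_le_eq_choose (n R : ℕ) :
    Nat.card {x : Fin n → ℕ // ∑ i, x i ≤ R} = (n + R).choose R := by
  have e : {y : Fin (n + 1) → ℕ // ∑ i, y i = R} ≃ {x : Fin n → ℕ // ∑ i, x i ≤ R} :=
    (Equiv.subtypeEquivRight fun y => by rw [Fin.sum_univ_succ]; rfl).trans
      (consSlackEquiv (fun x => ∑ i, x i) R)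
  rw [← Nat.card_congr e, ← Nat.card_congr (Sym.equivNatSumOfFintype (Fin (n + 1)) R),
    Nat.card_eq_fintype_card, Sym.card_sym_eq_choose, Fintype.card_fin, Nat.add_right_comm,
    Nat.add_sub_cancel]

def repsAEquiv (m ℓ n : ℕ) :
    {k : Fin (ℓ + 1) → ℕ // k 0 * 1 + ∑ i : Fin ℓ, k i.succ * (m - ℓ + 1 + i.val) = n} ≃
      {x : Fin ℓ → ℕ // ∑ i, x i * (m - ℓ + 1 + i.val) ≤ n} :=
  (Equiv.subtypeEquivRight fun k => by rw [mul_one]; rfl).trans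
    (consSlackEquiv (fun x => ∑ i, x i * (m - ℓ + 1 + i.val)) n)

instance (m ℓ n : ℕ) :
    Finite {k : Fin (ℓ + 1) → ℕ // k 0 * 1 + ∑ i : Fin ℓ, k i.succ * (m - ℓ + 1 + i.val) = n} :=
  have := finite_weightedSum_le (w := fun i : Fin ℓ => m - ℓ + 1 + i.val) (by omega) n
  Finite.of_equiv _ (repsAEquiv m ℓ n).symm

theorem rhoA_eq_choose {m ℓ R : ℕ} (hℓm : ℓ ≤ m) (hR : (ℓ - 1) * R ≤ m - ℓ) :
    rhoA m ℓ ((R + 1) * (m - ℓ + 1) - 1) = (ℓ + R).choose R := by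
  obtain ⟨d, rfl⟩ : ∃ d, m = ℓ + d := ⟨m - ℓ, by omega⟩
  rw [Nat.add_sub_cancel_left] at hR ⊢
  have hRm : R * (ℓ + d) ≤ (R + 1) * (d + 1) - 1 := by
    rw [Nat.sub_one_mul, Nat.mul_comm ℓ R] at hR
    have : (R + 1) * (d + 1) = R * d + R + d + 1 := by ring
    rw [Nat.mul_add]
    omega
  have hpos : 0 < (R + 1) * (d + 1) := by positivity
  rw [rhoA, Nat.card_congr (repsAEquiv _ _ _), ← card_sum_le_eq_choose]
  refine Nat.card_congr (Equiv.subtypeEquivRight fun x =>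
    weightedSum_le_iff_sum_le (b := d + 1) (W := ℓ + d) ?_ ?_ ?_ ?_ x)
  all_goals first | (intro i; have := i.isLt; omega) | omega

/-- The representation `n = n • 1` uses `n > h` summands. -/
theorem rhoALe_lt_rhoA {m ℓ h n : ℕ} (hhn : h < n) : rhoALe m ℓ h n < rhoA m ℓ n := by
  rw [rhoALe, rhoA, ← Nat.card_congr (Equiv.subtypeSubtypeEquivSubtypeInter _ _)]
  refine Finite.card_subtype_lt (x := ⟨Fin.cons n 0, by simp⟩) ?_
  simp [Fin.sum_cons, hhn]

lemma rhomA_eq_card {m ℓ : ℕ} (hℓ : 2 ≤ ℓ) (n : ℕ) :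
    rhomA m ℓ n = Nat.card {x : Fin ℓ → ℕ // ∑ i : Fin ℓ, x i *
      (if i.val + 1 < ℓ - 1 then i.val + 2 else if i.val + 1 = ℓ - 1 then m - 1 else m) ≤ n} := by
  rw [rhomA, ← Nat.card_congr (consSlackEquiv _ n)]
  refine Nat.card_congr (Equiv.subtypeEquivRight fun k => ?_)
  rw [Fin.sum_univ_succ]
  simp only [Fin.val_zero, Fin.val_succ, if_pos (show 0 < ℓ - 1 by omega), zero_add, mul_one]
  rfl

theorem choose_le_rhomA {m ℓ R n : ℕ} (hℓ : 2 ≤ ℓ) (hℓm : ℓ ≤ m) (hn : R * m ≤ n) :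
    (ℓ + R).choose R ≤ rhomA m ℓ n := by
  set w : Fin ℓ → ℕ := fun i =>
    if i.val + 1 < ℓ - 1 then i.val + 2 else if i.val + 1 = ℓ - 1 then m - 1 else m
  have hw : ∀ i, 0 < w i := fun i => by simp only [w]; split_ifs <;> omega
  have hwm : ∀ i, w i ≤ m := fun i => by simp only [w]; split_ifs <;> omega
  have := finite_weightedSum_le hw n
  rw [rhomA_eq_card hℓ, ← card_sum_le_eq_choose]
  exact Nat.card_le_card_of_injective
    (Subtype.impEmbedding _ _ fun x hx =>
      (weightedSum_le_sum_mul hwm x).trans ((Nat.mul_le_mul_right m hx).trans hn))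
    (Subtype.impEmbedding _ _ _).injective

theorem stmt_14_general (m ℓ R : ℕ) (hl : 2 ≤ ℓ) (hlm : 2 * ℓ ≤ m)
    (hR : (ℓ - 1) * R ≤ m - ℓ) (t : ℕ) (ht : t = (ℓ + R).choose R)
    (H : ℕ) (hH : H = 2 * R + 1) (g : ℕ) (hg : g = (R + 1) * (m - ℓ + 1) - 1) :
    ¬ (∀ n : ℕ, t ≤ rhoALe m ℓ H n ↔
        (n ≤ H * m ∧ t ≤ rhoA m ℓ n ∧ t ≤ rhomA m ℓ (H * m - n))) ∧
    (g ≤ H * m ∧ t ≤ rhoA m ℓ g ∧ t ≤ rhomA m ℓ (H * m - g)) ∧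
    rhoALe m ℓ H g < t := by
  have hA : rhoA m ℓ g = t := by rw [hg, ht]; exact rhoA_eq_choose (by omega) hR
  obtain ⟨hHg, hgHm, hRm⟩ : H < g ∧ g ≤ H * m ∧ R * m ≤ H * m - g := by
    obtain ⟨d, rfl⟩ : ∃ d, m = ℓ + d := ⟨m - ℓ, by omega⟩
    rw [Nat.add_sub_cancel_left] at hg
    subst hH hg
    have : 2 * R ≤ R * d := by nlinarith
    have : R ≤ R * ℓ := by nlinarith
    refine ⟨?_, ?_, ?_⟩ <;> ring_nf <;> omega
  have hmA : t ≤ rhomA m ℓ (H * m - g) := ht ▸ choose_le_rhomA hl (by omega) hRm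
  have hLe : rhoALe m ℓ H g < t := hA ▸ rhoALe_lt_rhoA hHg
  have hmem : g ≤ H * m ∧ t ≤ rhoA m ℓ g ∧ t ≤ rhomA m ℓ (H * m - g) := ⟨hgHm, hA.ge, hmA⟩
  exact ⟨fun hstruct => hLe.not_ge ((hstruct g).2 hmem), hmem, hLe⟩

/-- With `H = 2R+1`, the set `(HA)^{(t)}` is not structured: the element
`g = (R+1)(m−ℓ+1)−1` lies in `[0,Hm] ∖ (E_t(A) ∪ (Hm − E_t(m−A)))` but not in
`(HA)^{(t)}`. -/
theorem stmt_14 (m ℓ R : ℕ) (hm : 5 ≤ m) (hl : 2 ≤ ℓ) (hlm : 2 * ℓ ≤ m)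
    (hR : (ℓ - 1) * R ≤ m - ℓ) (t : ℕ) (ht : t = (ℓ + R).choose R)
    (H : ℕ) (hH : H = 2 * R + 1) (g : ℕ) (hg : g = (R + 1) * (m - ℓ + 1) - 1) :
    ¬ (∀ n : ℕ, t ≤ rhoALe m ℓ H n ↔
        (n ≤ H * m ∧ t ≤ rhoA m ℓ n ∧ t ≤ rhomA m ℓ (H * m - n))) ∧
    (g ≤ H * m ∧ t ≤ rhoA m ℓ g ∧ t ≤ rhomA m ℓ (H * m - g)) ∧
    rhoALe m ℓ H g < t :=
  stmt_14_general m ℓ R hl hlm hR t ht H hH g hg
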